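/- arXiv:1702.02326 — 2 statements merged into one kernel-verified Lean document; each statement's English description precedes it below -/
import Mathlib

section
/- Let n ≥ 2 and x ∈ ℝⁿ. The matrix w̃₀⁻¹·n̄_x admits a decomposition w̃₀⁻¹·n̄_x = n̄_y · m(ε,k) · a_t · ñ_z with y, z ∈ ℝⁿ, ε ∈ {±1}, k ∈ O(n) and t ∈ ℝ if and only if x ≠ 0. Moreover, if x ≠ 0, then in any such decomposition the components y, z, ε, k, t are uniquely determined and satisfy ε = 1, k = 1ₙ − 2xxᵀ/|x|² and t = 2 log|x| (so that e^{λt} = |x|^{2λ} for all λ ∈ ℂ). -/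
/- We work with real (n+2)×(n+2) matrices in block form with blocks of sizes (1, n, 1),
realized on the index type `Fin 1 ⊕ Fin n ⊕ Fin 1`. -/

/-- Index type for (1, n, 1) block matrices. -/
abbrev BIdx (n : ℕ) := Fin 1 ⊕ Fin n ⊕ Fin 1

/-- The matrix `n̄_x` for `x ∈ ℝⁿ`. -/
noncomputable def nbarM (n : ℕ) (x : Fin n → ℝ) : Matrix (BIdx n) (BIdx n) ℝ :=
  Matrix.of fun i j =>
    match i, j with
    | Sum.inl _, Sum.inl _ => 1 + (∑ a, x a ^ 2) / 2
    | Sum.inl _, Sum.inr (Sum.inl b) => x b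
    | Sum.inl _, Sum.inr (Sum.inr _) => (∑ a, x a ^ 2) / 2
    | Sum.inr (Sum.inl a), Sum.inl _ => x a
    | Sum.inr (Sum.inl a), Sum.inr (Sum.inl b) => if a = b then 1 else 0
    | Sum.inr (Sum.inl a), Sum.inr (Sum.inr _) => x a
    | Sum.inr (Sum.inr _), Sum.inl _ => -((∑ a, x a ^ 2) / 2)
    | Sum.inr (Sum.inr _), Sum.inr (Sum.inl b) => -x b
    | Sum.inr (Sum.inr _), Sum.inr (Sum.inr _) => 1 - (∑ a, x a ^ 2) / 2

/-- The matrix `ñ_x` for `x ∈ ℝⁿ`. -/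
noncomputable def ntildeM (n : ℕ) (x : Fin n → ℝ) : Matrix (BIdx n) (BIdx n) ℝ :=
  Matrix.of fun i j =>
    match i, j with
    | Sum.inl _, Sum.inl _ => 1 + (∑ a, x a ^ 2) / 2
    | Sum.inl _, Sum.inr (Sum.inl b) => x b
    | Sum.inl _, Sum.inr (Sum.inr _) => -((∑ a, x a ^ 2) / 2)
    | Sum.inr (Sum.inl a), Sum.inl _ => x a
    | Sum.inr (Sum.inl a), Sum.inr (Sum.inl b) => if a = b then 1 else 0
    | Sum.inr (Sum.inl a), Sum.inr (Sum.inr _) => -x a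
    | Sum.inr (Sum.inr _), Sum.inl _ => (∑ a, x a ^ 2) / 2
    | Sum.inr (Sum.inr _), Sum.inr (Sum.inl b) => x b
    | Sum.inr (Sum.inr _), Sum.inr (Sum.inr _) => 1 - (∑ a, x a ^ 2) / 2

/-- The block-diagonal matrix `m(ε, k) = diag(ε, k, ε)`. -/
def mBlockM (n : ℕ) (ε : ℝ) (k : Matrix (Fin n) (Fin n) ℝ) : Matrix (BIdx n) (BIdx n) ℝ :=
  Matrix.of fun i j =>
    match i, j with
    | Sum.inl _, Sum.inl _ => ε
    | Sum.inr (Sum.inl a), Sum.inr (Sum.inl b) => k a b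
    | Sum.inr (Sum.inr _), Sum.inr (Sum.inr _) => ε
    | _, _ => 0

/-- The matrix `a_t`: the identity except for the four corner entries, which are
`cosh t` (on the diagonal) and `sinh t` (off the diagonal). -/
noncomputable def aMatM (n : ℕ) (t : ℝ) : Matrix (BIdx n) (BIdx n) ℝ :=
  Matrix.of fun i j =>
    match i, j with
    | Sum.inl _, Sum.inl _ => Real.cosh t
    | Sum.inl _, Sum.inr (Sum.inr _) => Real.sinh t
    | Sum.inr (Sum.inr _), Sum.inl _ => Real.sinh t
    | Sum.inr (Sum.inr _), Sum.inr (Sum.inr _) => Real.cosh t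
    | Sum.inr (Sum.inl a), Sum.inr (Sum.inl b) => if a = b then 1 else 0
    | _, _ => 0

/-- The matrix `w̃₀ = diag(1, …, 1, −1)`. -/
def w0M (n : ℕ) : Matrix (BIdx n) (BIdx n) ℝ :=
  Matrix.of fun i j =>
    match i, j with
    | Sum.inl _, Sum.inl _ => 1
    | Sum.inr (Sum.inl a), Sum.inr (Sum.inl b) => if a = b then 1 else 0
    | Sum.inr (Sum.inr _), Sum.inr (Sum.inr _) => -1
    | _, _ => 0


noncomputable def prodM (n : ℕ) (ε : ℝ) (k : Matrix (Fin n) (Fin n) ℝ) (t : ℝ)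
    (y z : Fin n → ℝ) : Matrix (BIdx n) (BIdx n) ℝ :=
  Matrix.of fun i j =>
    match i, j with
    | Sum.inl _, Sum.inl _ =>
        ε * (Real.cosh t + (∑ a, z a ^ 2) / 2 * Real.exp t
          + (∑ a, y a ^ 2) / 2 * Real.exp t * (1 + ∑ a, z a ^ 2))
          + ∑ b, ∑ a, y a * k a b * z b
    | Sum.inl _, Sum.inr (Sum.inl b) =>
        ε * Real.exp t * (1 + ∑ a, y a ^ 2) * z b + ∑ a, y a * k a b
    | Sum.inl _, Sum.inr (Sum.inr _) =>
        ε * (Real.sinh t - (∑ a, z a ^ 2) / 2 * Real.exp t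
          + (∑ a, y a ^ 2) / 2 * Real.exp t * (1 - ∑ a, z a ^ 2))
          - ∑ b, ∑ a, y a * k a b * z b
    | Sum.inr (Sum.inl a), Sum.inl _ =>
        ε * Real.exp t * (1 + ∑ a, z a ^ 2) * y a + ∑ b, k a b * z b
    | Sum.inr (Sum.inl a), Sum.inr (Sum.inl b) =>
        k a b + 2 * ε * Real.exp t * y a * z b
    | Sum.inr (Sum.inl a), Sum.inr (Sum.inr _) =>
        ε * Real.exp t * (1 - ∑ a, z a ^ 2) * y a - ∑ b, k a b * z b
    | Sum.inr (Sum.inr _), Sum.inl _ =>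
        ε * (Real.sinh t + (∑ a, z a ^ 2) / 2 * Real.exp t
          - (∑ a, y a ^ 2) / 2 * Real.exp t * (1 + ∑ a, z a ^ 2))
          - ∑ b, ∑ a, y a * k a b * z b
    | Sum.inr (Sum.inr _), Sum.inr (Sum.inl b) =>
        ε * Real.exp t * (1 - ∑ a, y a ^ 2) * z b - ∑ a, y a * k a b
    | Sum.inr (Sum.inr _), Sum.inr (Sum.inr _) =>
        ε * (Real.cosh t - (∑ a, z a ^ 2) / 2 * Real.exp t
          - (∑ a, y a ^ 2) / 2 * Real.exp t * (1 - ∑ a, z a ^ 2))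
          + ∑ b, ∑ a, y a * k a b * z b

set_option maxHeartbeats 2000000 in
theorem prod_eq (n : ℕ) (y z : Fin n → ℝ) (ε : ℝ) (k : Matrix (Fin n) (Fin n) ℝ) (t : ℝ) :
    nbarM n y * mBlockM n ε k * aMatM n t * ntildeM n z = prodM n ε k t y z := by
  ext i j
  rcases i with i0 | a | i0 <;> rcases j with j0 | b | j0 <;>
    simp [Matrix.mul_apply, Fintype.sum_sum_type, nbarM, ntildeM, mBlockM, aMatM, prodM,
      Finset.sum_add_distrib, Finset.mul_sum, Finset.sum_mul,
      Real.cosh_eq, Real.sinh_eq, Real.exp_neg] <;>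
    ring_nf

noncomputable def lhsM (n : ℕ) (x : Fin n → ℝ) : Matrix (BIdx n) (BIdx n) ℝ :=
  Matrix.of fun i j =>
    match i, j with
    | Sum.inl _, Sum.inl _ => 1 + (∑ a, x a ^ 2) / 2
    | Sum.inl _, Sum.inr (Sum.inl b) => x b
    | Sum.inl _, Sum.inr (Sum.inr _) => (∑ a, x a ^ 2) / 2
    | Sum.inr (Sum.inl a), Sum.inl _ => x a
    | Sum.inr (Sum.inl a), Sum.inr (Sum.inl b) => if a = b then 1 else 0
    | Sum.inr (Sum.inl a), Sum.inr (Sum.inr _) => x a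
    | Sum.inr (Sum.inr _), Sum.inl _ => (∑ a, x a ^ 2) / 2
    | Sum.inr (Sum.inr _), Sum.inr (Sum.inl b) => x b
    | Sum.inr (Sum.inr _), Sum.inr (Sum.inr _) => (∑ a, x a ^ 2) / 2 - 1

theorem w0_mul_w0 (n : ℕ) : w0M n * w0M n = 1 := by
  ext i j
  rcases i with i0 | a | i0 <;> rcases j with j0 | b | j0 <;>
    simp [Matrix.mul_apply, Fintype.sum_sum_type, w0M, Matrix.one_apply, Fin.fin_one_eq_zero]

theorem w0_inv (n : ℕ) : (w0M n)⁻¹ = w0M n :=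
  Matrix.inv_eq_right_inv (w0_mul_w0 n)

theorem w0_mul_nbar (n : ℕ) (x : Fin n → ℝ) : w0M n * nbarM n x = lhsM n x := by
  ext i j
  rcases i with i0 | a | i0 <;> rcases j with j0 | b | j0 <;>
    simp [Matrix.mul_apply, Fintype.sum_sum_type, w0M, nbarM, lhsM]

theorem sum_sq_pos {n : ℕ} {x : Fin n → ℝ} (hx : x ≠ 0) : 0 < ∑ a, x a ^ 2 := by
  obtain ⟨a0, ha0⟩ := Function.ne_iff.1 hx
  have ha0' : x a0 ≠ 0 := by simpa using ha0
  have : 0 < x a0 ^ 2 := by positivity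
  exact Finset.sum_pos' (fun a _ => sq_nonneg _) ⟨a0, Finset.mem_univ _, this⟩

theorem uniq {n : ℕ} {x : Fin n → ℝ} (hx : x ≠ 0) (y z : Fin n → ℝ) (ε : ℝ)
    (k : Matrix (Fin n) (Fin n) ℝ) (t : ℝ) (hε : ε = 1 ∨ ε = -1)
    (heq : lhsM n x = prodM n ε k t y z) :
    ε = 1 ∧ Real.exp t = ∑ a, x a ^ 2
      ∧ y = (fun a => x a / ∑ a, x a ^ 2) ∧ z = (fun a => x a / ∑ a, x a ^ 2)
      ∧ k = 1 - (2 / ∑ a, x a ^ 2) • Matrix.of (fun a b : Fin n => x a * x b) := by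
  set s := ∑ a, x a ^ 2 with hs_def
  have hs : 0 < s := sum_sq_pos hx
  set p := Real.exp t with hp_def
  have hp : 0 < p := Real.exp_pos t
  have hε2 : ε * ε = 1 := by rcases hε with h | h <;> rw [h] <;> ring
  have hij := Matrix.ext_iff.mpr heq
  -- E2 + E3 : x = ε p y
  have hxy : ∀ a, x a = ε * p * y a := by
    intro a
    have E2 := hij (Sum.inr (Sum.inl a)) (Sum.inl 0)
    have E3 := hij (Sum.inr (Sum.inl a)) (Sum.inr (Sum.inr 0))
    simp only [lhsM, prodM, Matrix.of_apply] at E2 E3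
    linear_combination (E2 + E3) / 2
  have hxz : ∀ b, x b = ε * p * z b := by
    intro b
    have E4 := hij (Sum.inl 0) (Sum.inr (Sum.inl b))
    have E5 := hij (Sum.inr (Sum.inr 0)) (Sum.inr (Sum.inl b))
    simp only [lhsM, prodM, Matrix.of_apply] at E4 E5
    linear_combination (E4 + E5) / 2
  set sz := ∑ a, z a ^ 2 with hsz_def
  -- E2 - E3 : Kz = - sz • x
  have hKz : ∀ a, (∑ b, k a b * z b) = -(sz * x a) := by
    intro a
    have E2 := hij (Sum.inr (Sum.inl a)) (Sum.inl 0)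
    simp only [lhsM, prodM, Matrix.of_apply] at E2
    linear_combination (1 + sz) * (hxy a) - E2
  -- E1 : k entries
  have hkab : ∀ a b, k a b = (if a = b then 1 else 0) - 2 * ε * p * y a * z b := by
    intro a b
    have E1 := hij (Sum.inr (Sum.inl a)) (Sum.inr (Sum.inl b))
    simp only [lhsM, prodM, Matrix.of_apply] at E1
    linear_combination -E1
  -- compute Kz from hkab
  have hKz2 : ∀ a, (∑ b, k a b * z b) = z a - 2 * ε * p * y a * sz := by
    intro a
    calc (∑ b, k a b * z b)
        = ∑ b, ((if a = b then 1 else 0) * z b - 2 * ε * p * y a * z b ^ 2) := by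
          refine Finset.sum_congr rfl fun b _ => ?_
          rw [hkab a b]; ring
      _ = z a - 2 * ε * p * y a * sz := by
          rw [Finset.sum_sub_distrib, ← Finset.mul_sum]
          simp [ite_mul, hsz_def]
  -- q := ε p, relation s = q^2 sz
  have hs_eq : s = (ε * p) ^ 2 * sz := by
    rw [hs_def, hsz_def, Finset.mul_sum]
    refine Finset.sum_congr rfl fun a _ => ?_
    rw [hxz a]; ring
  -- pick a0 with x a0 ≠ 0
  obtain ⟨a0, ha0⟩ := Function.ne_iff.1 hx
  have key : x a0 * (1 - sz * (ε * p)) = 0 := by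
    have h1 := hKz a0
    have h2 := hKz2 a0
    have h3 : z a0 - 2 * ε * p * y a0 * sz = -(sz * x a0) := by rw [← h2, h1]
    -- multiply by ε p, using hxz a0 and hxy a0
    have h4 : ε * p * z a0 - 2 * (ε * p) * (ε * p * y a0) * sz = -(sz * x a0) * (ε * p) := by
      linear_combination (ε * p) * h3
    rw [← hxz a0, ← hxy a0] at h4
    linear_combination h4
  have hszq : sz * (ε * p) = 1 := by
    have := (mul_eq_zero.1 key).resolve_left ha0
    linarith
  have hq : ε * p = s := by
    have : s = (ε * p) := by
      rw [hs_eq]; nlinarith [hszq]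
    linarith
  have hε1 : ε = 1 := by
    rcases hε with h | h
    · exact h
    · exfalso; rw [h] at hq; nlinarith
  have hps : p = s := by rw [hε1] at hq; linarith
  refine ⟨hε1, hps, ?_, ?_, ?_⟩
  · funext a
    have := hxy a
    rw [hε1, hps] at this
    field_simp [this]
    linear_combination -this
  · funext b
    have := hxz b
    rw [hε1, hps] at this
    field_simp [this]
    linear_combination -this
  · ext a b
    rw [hkab a b, hε1, hps]
    have hya : y a = x a / s := by
      have := hxy a; rw [hε1, hps] at this; field_simp [this]; linear_combination -this
    have hzb : z b = x b / s := by
      have := hxz b; rw [hε1, hps] at this; field_simp [this]; linear_combination -this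
    rw [hya, hzb]
    simp [Matrix.one_apply, Matrix.sub_apply, Matrix.smul_apply]
    field_simp

set_option maxHeartbeats 2000000 in
theorem exists_decomp {n : ℕ} {x : Fin n → ℝ} (hx : x ≠ 0) :
    ((1 - (2 / ∑ a, x a ^ 2) • Matrix.of (fun a b : Fin n => x a * x b)).transpose
        * (1 - (2 / ∑ a, x a ^ 2) • Matrix.of (fun a b : Fin n => x a * x b)) = 1)
    ∧ ((1 - (2 / ∑ a, x a ^ 2) • Matrix.of (fun a b : Fin n => x a * x b))
        * (1 - (2 / ∑ a, x a ^ 2) • Matrix.of (fun a b : Fin n => x a * x b)).transpose = 1)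
    ∧ lhsM n x = prodM n 1 (1 - (2 / ∑ a, x a ^ 2) • Matrix.of (fun a b : Fin n => x a * x b))
        (Real.log (∑ a, x a ^ 2)) (fun a => x a / ∑ a, x a ^ 2) (fun a => x a / ∑ a, x a ^ 2) := by
  set s := ∑ a, x a ^ 2 with hs_def
  have hs : 0 < s := sum_sq_pos hx
  have hs0 : s ≠ 0 := hs.ne'
  set k0 : Matrix (Fin n) (Fin n) ℝ := 1 - (2 / s) • Matrix.of (fun a b : Fin n => x a * x b)
    with hk0_def
  have hk0_apply : ∀ a b, k0 a b = (if a = b then 1 else 0) - 2 / s * (x a * x b) := by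
    intro a b
    simp [hk0_def, Matrix.sub_apply, Matrix.smul_apply, Matrix.one_apply]
  have hsymm : k0.transpose = k0 := by
    ext a b
    rw [Matrix.transpose_apply, hk0_apply, hk0_apply]
    by_cases h : a = b
    · subst h; ring
    · rw [if_neg h, if_neg (Ne.symm h)]; ring
  have hk0sq : k0 * k0 = 1 := by
    ext a b
    simp only [Matrix.mul_apply]
    have hterm : ∀ c, k0 a c * k0 c b =
        (if a = c then 1 else 0) * (if c = b then 1 else 0)
        - (2 / s * (x c * x b)) * (if a = c then 1 else 0)
        - (2 / s * (x a * x c)) * (if c = b then 1 else 0)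
        + (4 / (s * s) * (x a * x b)) * x c ^ 2 := by
      intro c; rw [hk0_apply, hk0_apply]; ring
    rw [Finset.sum_congr rfl fun c _ => hterm c, Finset.sum_add_distrib,
      Finset.sum_sub_distrib, Finset.sum_sub_distrib, ← Finset.mul_sum, ← hs_def]
    simp only [ite_mul, mul_ite, one_mul, mul_one, zero_mul, mul_zero,
      Finset.sum_ite_eq, Finset.sum_ite_eq', Finset.mem_univ, if_true, Matrix.one_apply]
    field_simp
    split <;> ring
  have hexp : Real.exp (Real.log s) = s := Real.exp_log hs
  have hcosh : Real.cosh (Real.log s) = (s + s⁻¹) / 2 := Real.cosh_log hs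
  have hsinh : Real.sinh (Real.log s) = (s - s⁻¹) / 2 := Real.sinh_log hs
  have hsz : (∑ a, (x a / s) ^ 2) = s⁻¹ := by
    rw [show (∑ a, (x a / s) ^ 2) = (∑ a, x a ^ 2) / s ^ 2 by
      rw [Finset.sum_div]; exact Finset.sum_congr rfl fun a _ => by ring]
    rw [← hs_def, sq]
    field_simp
  have hKz : ∀ a, (∑ b, k0 a b * (x b / s)) = -(x a / s) := by
    intro a
    have h1 : ∀ b, k0 a b * (x b / s)
        = (if a = b then 1 else 0) * (x b / s) - (2 * x a / (s * s)) * x b ^ 2 := by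
      intro b; rw [hk0_apply]; ring
    rw [Finset.sum_congr rfl fun b _ => h1 b, Finset.sum_sub_distrib, ← Finset.mul_sum, ← hs_def]
    simp only [ite_mul, one_mul, zero_mul, Finset.sum_ite_eq, Finset.mem_univ, if_true]
    field_simp
    ring
  have hKy : ∀ b, (∑ a, (x a / s) * k0 a b) = -(x b / s) := by
    intro b
    have h1 : ∀ a, (x a / s) * k0 a b
        = (if a = b then 1 else 0) * (x a / s) - (2 * x b / (s * s)) * x a ^ 2 := by
      intro a; rw [hk0_apply]; ring
    rw [Finset.sum_congr rfl fun a _ => h1 a, Finset.sum_sub_distrib, ← Finset.mul_sum, ← hs_def]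
    simp only [ite_mul, one_mul, zero_mul, Finset.sum_ite_eq', Finset.mem_univ, if_true]
    field_simp
    ring
  have hykz : (∑ b, ∑ a, (x a / s) * k0 a b * (x b / s)) = -s⁻¹ := by
    have h1 : ∀ b, (∑ a, (x a / s) * k0 a b * (x b / s)) = -(x b / s) * (x b / s) := by
      intro b
      rw [show (∑ a, (x a / s) * k0 a b * (x b / s))
          = (∑ a, (x a / s) * k0 a b) * (x b / s) from (Finset.sum_mul _ _ _).symm, hKy b]
    rw [Finset.sum_congr rfl fun b _ => h1 b,
      Finset.sum_congr rfl fun b _ => (by ring : -(x b / s) * (x b / s) = -(x b ^ 2 / (s * s)))]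
    rw [Finset.sum_neg_distrib, ← Finset.sum_div, ← hs_def]
    field_simp
  refine ⟨by rw [hsymm]; exact hk0sq, by rw [hsymm]; exact hk0sq, ?_⟩
  ext i j
  rcases i with i0 | a | i0 <;> rcases j with j0 | b | j0 <;>
    simp only [lhsM, prodM, Matrix.of_apply, hsz, hKz, hKy, hykz, hexp, hcosh, hsinh, one_mul] <;>
    (try simp only [hk0_apply]) <;> field_simp <;> ring_nf <;> try (split <;> ring)
  all_goals (rw [← hs_def]; ring)

theorem eq_conv (n : ℕ) (x y z : Fin n → ℝ) (ε : ℝ) (k : Matrix (Fin n) (Fin n) ℝ) (t : ℝ) :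
    ((w0M n)⁻¹ * nbarM n x = nbarM n y * mBlockM n ε k * aMatM n t * ntildeM n z)
      ↔ lhsM n x = prodM n ε k t y z := by
  rw [w0_inv, w0_mul_nbar, prod_eq]

theorem no_decomp_zero {n : ℕ} (hn : 2 ≤ n) (y z : Fin n → ℝ) (ε : ℝ)
    (k : Matrix (Fin n) (Fin n) ℝ) (t : ℝ) (hε : ε = 1 ∨ ε = -1)
    (heq : lhsM n (0 : Fin n → ℝ) = prodM n ε k t y z) : False := by
  have hεp : ε * Real.exp t ≠ 0 := by
    rcases hε with h | h <;> rw [h] <;> simp [Real.exp_ne_zero]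
  have hij := Matrix.ext_iff.mpr heq
  have hy : ∀ a, y a = 0 := by
    intro a
    have E2 := hij (Sum.inr (Sum.inl a)) (Sum.inl 0)
    have E3 := hij (Sum.inr (Sum.inl a)) (Sum.inr (Sum.inr 0))
    simp only [lhsM, prodM, Matrix.of_apply, Pi.zero_apply] at E2 E3
    have h2 : ε * Real.exp t * y a = 0 := by linear_combination (-E2 - E3) / 2
    exact (mul_eq_zero.1 h2).resolve_left hεp
  have hz : ∀ b, z b = 0 := by
    intro b
    have E4 := hij (Sum.inl 0) (Sum.inr (Sum.inl b))
    have E5 := hij (Sum.inr (Sum.inr 0)) (Sum.inr (Sum.inl b))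
    simp only [lhsM, prodM, Matrix.of_apply, Pi.zero_apply] at E4 E5
    have h2 : ε * Real.exp t * z b = 0 := by linear_combination (-E4 - E5) / 2
    exact (mul_eq_zero.1 h2).resolve_left hεp
  have E6 := hij (Sum.inl 0) (Sum.inl 0)
  have E7 := hij (Sum.inr (Sum.inr 0)) (Sum.inr (Sum.inr 0))
  simp only [lhsM, prodM, Matrix.of_apply, Pi.zero_apply] at E6 E7
  have hy0 : (fun a => y a) = fun _ => (0:ℝ) := funext hy
  have hz0 : (fun b => z b) = fun _ => (0:ℝ) := funext hz
  simp only [hy, hz] at E6 E7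
  simp at E6 E7
  -- E6 : 1 = ε * cosh t ; E7 : -1 = ε * cosh t
  linarith [E6, E7]

theorem cpow_part {s t : ℝ} (hs : 0 < s) (ht : Real.exp t = s) (lam : ℂ) :
    Complex.exp (lam * t) = ((Real.sqrt s : ℝ) : ℂ) ^ (2 * lam) := by
  have h1 : (0:ℝ) < Real.sqrt s := Real.sqrt_pos.2 hs
  have h2 : ((Real.sqrt s : ℝ) : ℂ) ≠ 0 := by exact_mod_cast h1.ne'
  rw [Complex.cpow_def_of_ne_zero h2, ← Complex.ofReal_log h1.le]
  have h3 : Real.log (Real.sqrt s) = t / 2 := by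
    rw [Real.log_sqrt hs.le, ← ht, Real.log_exp]
  rw [h3]
  congr 1
  push_cast
  ring

theorem t_val {s t : ℝ} (hs : 0 < s) (ht : Real.exp t = s) :
    t = 2 * Real.log (Real.sqrt s) := by
  rw [Real.log_sqrt hs.le, ← ht, Real.log_exp]; ring

theorem statement0 (n : ℕ) (hn : 2 ≤ n) (x : Fin n → ℝ) :
    ((∃ (y z : Fin n → ℝ) (ε : ℝ) (k : Matrix (Fin n) (Fin n) ℝ) (t : ℝ),
        (ε = 1 ∨ ε = -1) ∧ k.transpose * k = 1 ∧ k * k.transpose = 1 ∧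
        (w0M n)⁻¹ * nbarM n x = nbarM n y * mBlockM n ε k * aMatM n t * ntildeM n z)
      ↔ x ≠ 0)
    ∧ (x ≠ 0 →
      (∀ (y z : Fin n → ℝ) (ε : ℝ) (k : Matrix (Fin n) (Fin n) ℝ) (t : ℝ),
        (ε = 1 ∨ ε = -1) → k.transpose * k = 1 → k * k.transpose = 1 →
        (w0M n)⁻¹ * nbarM n x = nbarM n y * mBlockM n ε k * aMatM n t * ntildeM n z →
        ε = 1
        ∧ k = 1 - (2 / ∑ a, x a ^ 2) • Matrix.of (fun a b : Fin n => x a * x b)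
        ∧ t = 2 * Real.log (Real.sqrt (∑ a, x a ^ 2))
        ∧ ∀ lam : ℂ, Complex.exp (lam * t)
            = ((Real.sqrt (∑ a, x a ^ 2) : ℝ) : ℂ) ^ (2 * lam))
      ∧ (∀ (y z : Fin n → ℝ) (ε : ℝ) (k : Matrix (Fin n) (Fin n) ℝ) (t : ℝ)
          (y' z' : Fin n → ℝ) (ε' : ℝ) (k' : Matrix (Fin n) (Fin n) ℝ) (t' : ℝ),
        (ε = 1 ∨ ε = -1) → k.transpose * k = 1 → k * k.transpose = 1 →
        (ε' = 1 ∨ ε' = -1) → k'.transpose * k' = 1 → k' * k'.transpose = 1 →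
        (w0M n)⁻¹ * nbarM n x = nbarM n y * mBlockM n ε k * aMatM n t * ntildeM n z →
        (w0M n)⁻¹ * nbarM n x = nbarM n y' * mBlockM n ε' k' * aMatM n t' * ntildeM n z' →
        y = y' ∧ z = z' ∧ ε = ε' ∧ k = k' ∧ t = t')) := by
  constructor
  · constructor
    · rintro ⟨y, z, ε, k, t, hε, -, -, heq⟩ hx0
      rw [eq_conv] at heq
      subst hx0
      exact no_decomp_zero hn y z ε k t hε heq
    · intro hx
      have hs : 0 < ∑ a, x a ^ 2 := sum_sq_pos hx
      obtain ⟨h1, h2, h3⟩ := exists_decomp hx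
      exact ⟨_, _, 1, _, Real.log (∑ a, x a ^ 2), Or.inl rfl, h1, h2, (eq_conv ..).mpr h3⟩
  · intro hx
    have hs : 0 < ∑ a, x a ^ 2 := sum_sq_pos hx
    constructor
    · intro y z ε k t hε _ _ heq
      rw [eq_conv] at heq
      obtain ⟨hε1, hexp, hy, hz, hk⟩ := uniq hx y z ε k t hε heq
      exact ⟨hε1, hk, t_val hs hexp, fun lam => cpow_part hs hexp lam⟩
    · intro y z ε k t y' z' ε' k' t' hε _ _ hε' _ _ heq heq'
      rw [eq_conv] at heq heq'
      obtain ⟨hε1, hexp, hy, hz, hk⟩ := uniq hx y z ε k t hε heq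
      obtain ⟨hε1', hexp', hy', hz', hk'⟩ := uniq hx y' z' ε' k' t' hε' heq'
      refine ⟨hy.trans hy'.symm, hz.trans hz'.symm, hε1.trans hε1'.symm, hk.trans hk'.symm, ?_⟩
      have := Real.exp_injective (hexp.trans hexp'.symm)
      exact this
end

section
/- Let P : S → T be a nonzero linear map such that P∘E_a = −F_a∘P for all 1 ≤ a ≤ n−1, and suppose there exists a linear subspace S¹ ⊆ S with P(S¹) = T and P(E_n v) = 0 for all v ∈ S¹. Then the n linear maps P∘E_1, …, P∘E_n : S → T are linearly independent in Hom(S,T). -/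
/-- if `P : S → T` is a nonzero linear map with `P ∘ E_a = -F_a ∘ P` for
`a = 1, …, n-1` (here indexed by `0, …, n-2`), and there is a subspace `S¹ ⊆ S` with
`P(S¹) = T` and `P(E_n v) = 0` for all `v ∈ S¹`, then `P ∘ E_1, …, P ∘ E_n` are linearly
independent in `Hom(S, T)`. -/
theorem statement15 (n : ℕ) (hn : 2 ≤ n) (S T : Type*)
    [AddCommGroup S] [Module ℂ S] [AddCommGroup T] [Module ℂ T] [Nontrivial T]
    (E : ℕ → S →ₗ[ℂ] S) (F : ℕ → T →ₗ[ℂ] T)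
    (hClE : ∀ a b : ℕ, a < n → b < n →
      E a ∘ₗ E b + E b ∘ₗ E a
        = if a = b then (-2 : ℂ) • (LinearMap.id : S →ₗ[ℂ] S) else 0)
    (hClF : ∀ a b : ℕ, a < n - 1 → b < n - 1 →
      F a ∘ₗ F b + F b ∘ₗ F a
        = if a = b then (-2 : ℂ) • (LinearMap.id : T →ₗ[ℂ] T) else 0)
    (P : S →ₗ[ℂ] T) (hP : P ≠ 0)
    (hPE : ∀ a : ℕ, a < n - 1 → P ∘ₗ E a = -(F a ∘ₗ P))
    (S1 : Submodule ℂ S) (hS1 : Submodule.map P S1 = ⊤)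
    (hker : ∀ v ∈ S1, P (E (n - 1) v) = 0) :
    LinearIndependent ℂ (fun a : Fin n => P ∘ₗ E (a : ℕ)) := by

  rw [Fintype.linearIndependent_iff]
  intro g hg
  have hn1 : n - 1 < n := by omega
  -- E (n-1) squared is -id
  have hEsq : E (n-1) ∘ₗ E (n-1) = -(LinearMap.id : S →ₗ[ℂ] S) := by
    have h := hClE (n-1) (n-1) hn1 hn1
    rw [if_pos rfl] at h
    have h2 : (2:ℂ) • (E (n-1) ∘ₗ E (n-1)) = (2:ℂ) • (-(LinearMap.id : S →ₗ[ℂ] S)) := by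
      rw [two_smul]; rw [h]; ext x; simp
    exact smul_right_injective _ (by norm_num) h2
  have hPEn : P ∘ₗ E (n-1) ≠ 0 := by
    intro h0
    apply hP
    have : P ∘ₗ (E (n-1) ∘ₗ E (n-1)) = 0 := by
      rw [← LinearMap.comp_assoc, h0, LinearMap.zero_comp]
    rw [hEsq] at this
    ext x
    have := LinearMap.congr_fun this x
    simpa using this
  -- key: the sum of g i • F i vanishes on all of T
  have hG : ∀ t : T, (∑ i : Fin n, if (i:ℕ) = n - 1 then (0:T) else g i • F i t) = 0 := by
    intro t
    obtain ⟨v, hv, hpv⟩ : ∃ v ∈ S1, P v = t := by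
      have : t ∈ Submodule.map P S1 := by rw [hS1]; trivial
      simpa using this
    have hs := LinearMap.congr_fun hg v
    simp only [LinearMap.coe_sum, Finset.sum_apply, LinearMap.smul_apply,
      LinearMap.comp_apply, LinearMap.zero_apply] at hs
    have heq : ∀ i : Fin n, g i • P (E (i:ℕ) v)
        = -(if (i:ℕ) = n - 1 then (0:T) else g i • F i t) := by
      intro i
      by_cases h : (i:ℕ) = n - 1
      · rw [if_pos h, h, hker v hv, smul_zero, neg_zero]
      · rw [if_neg h]
        have hi : (i:ℕ) < n - 1 := by have := i.isLt; omega
        have := LinearMap.congr_fun (hPE i hi) v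
        simp only [LinearMap.comp_apply, LinearMap.neg_apply] at this
        rw [this, hpv, smul_neg]
    rw [Finset.sum_congr rfl (fun i _ => heq i), Finset.sum_neg_distrib] at hs
    exact neg_eq_zero.mp hs
  -- conclude g b = 0 for b < n-1
  have hgb : ∀ i : Fin n, (i:ℕ) < n - 1 → g i = 0 := by
    intro b hb
    obtain ⟨t, ht⟩ := exists_ne (0 : T)
    have h1 := congrArg (F b) (hG t)
    have h2 := hG (F (b:ℕ) t)
    rw [map_sum] at h1
    have hsum : (∑ i : Fin n,
        ((F (b:ℕ) (if (i:ℕ) = n - 1 then (0:T) else g i • F i t))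
          + (if (i:ℕ) = n - 1 then (0:T) else g i • F i (F (b:ℕ) t))))
        = (-2 : ℂ) • g b • t := by
      have : ∀ i : Fin n, (F (b:ℕ) (if (i:ℕ) = n - 1 then (0:T) else g i • F i t))
          + (if (i:ℕ) = n - 1 then (0:T) else g i • F i (F (b:ℕ) t))
          = if i = b then (-2:ℂ) • g b • t else 0 := by
        intro i
        by_cases h : (i:ℕ) = n - 1
        · have hib : i ≠ b := by intro hh; rw [hh] at h; omega
          simp [h, hib]
        · have hi : (i:ℕ) < n - 1 := by have := i.isLt; omega
          rw [if_neg h, if_neg h, map_smul, ← smul_add]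
          by_cases hib : i = b
          · subst hib
            have hcl := LinearMap.congr_fun (hClF (i:ℕ) (i:ℕ) hb hi) t
            rw [if_pos rfl] at hcl
            simp only [LinearMap.add_apply, LinearMap.comp_apply, LinearMap.smul_apply,
              LinearMap.id_apply] at hcl
            rw [if_pos rfl, hcl, smul_comm]
          · have hcl := LinearMap.congr_fun (hClF (b:ℕ) (i:ℕ) hb hi) t
            rw [if_neg (by intro hh; exact hib (Fin.ext (hh.symm)))] at hcl
            simp only [LinearMap.add_apply, LinearMap.comp_apply,
              LinearMap.zero_apply] at hcl
            rw [if_neg hib, hcl, smul_zero]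
      rw [Finset.sum_congr rfl (fun i _ => this i)]
      simp
    rw [Finset.sum_add_distrib, h1, h2, map_zero, zero_add] at hsum
    have : g b • t = 0 := by
      have h3 : (-2:ℂ) • g b • t = 0 := hsum.symm
      have := smul_eq_zero.mp h3
      rcases this with h | h
      · norm_num at h
      · exact h
    rcases smul_eq_zero.mp this with h | h
    · exact h
    · exact absurd h ht
  -- conclude g (last) = 0
  intro i
  by_cases h : (i:ℕ) = n - 1
  · have hrest : ∀ j : Fin n, j ≠ i → g j • (P ∘ₗ E (j:ℕ)) = 0 := by
      intro j hj
      have : (j:ℕ) < n - 1 := by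
        have := j.isLt
        have : (j:ℕ) ≠ n - 1 := by
          intro hh; apply hj; apply Fin.ext; rw [hh, h]
        omega
      rw [hgb j this, zero_smul]
    have : g i • (P ∘ₗ E (i:ℕ)) = 0 := by
      have := Finset.sum_eq_single_of_mem i (Finset.mem_univ i)
        (fun j _ hj => hrest j hj)
      rw [← this, hg]
    rcases smul_eq_zero.mp this with hh | hh
    · exact hh
    · rw [h] at hh; exact absurd hh hPEn
  · exact hgb i (by have := i.isLt; omega)
end
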